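/- Let E be a locally small category with colimits of small κ-filtered diagrams, let X, Y : I → E be small λ-filtered diagrams (κ ≤ λ) whose vertices are λ-presentable objects, let φ : X ⇒ Y be a natural transformation, and let i₀ be an object of I. If colim φ : colim X → colim Y is an isomorphism, then there exists a chain I' : κ → I with I'(0) = i₀ such that the induced morphism colim_{γ<κ} X(I'(γ)) → colim_{γ<κ} Y(I'(γ)) is an isomorphism. -/

import Mathlib

universe v u u₂

open CategoryTheory Limits Opposite

noncomputable section

/-- A small category with fewer than `κ` morphisms. -/
def CardSmallCat (K : Type v) [SmallCategory K] (κ : Cardinal.{v}) : Prop :=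
  Cardinal.mk (Σ p : K × K, p.1 ⟶ p.2) < κ

/-- `J` is `κ`-filtered: every `κ`-small diagram in `J` admits a cocone. -/
def IsCardFiltered (J : Type v) [SmallCategory J] (κ : Cardinal.{v}) : Prop :=
  ∀ (K : Type v) [SmallCategory K], CardSmallCat K κ → ∀ F : K ⥤ J, Nonempty (Cocone F)

/-- `A` is `κ`-presentable: `Hom(A,-)` preserves colimits of small `κ`-filtered diagrams. -/
def IsCardPresentable {C : Type u} [Category.{v} C] (κ : Cardinal.{v}) (A : C) : Prop :=
  ∀ (J : Type v) [SmallCategory J], IsCardFiltered J κ →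
    Nonempty (PreservesColimitsOfShape J (coyoneda.obj (op A)))

/-- `A` is `(κ, lam)`-presentable: `Hom(A,-)` preserves colimits of `lam`-small
`κ`-filtered diagrams. -/
def IsRelPresentable {C : Type u} [Category.{v} C] (κ lam : Cardinal.{v}) (A : C) : Prop :=
  ∀ (J : Type v) [SmallCategory J], CardSmallCat J lam → IsCardFiltered J κ →
    Nonempty (PreservesColimitsOfShape J (coyoneda.obj (op A)))

/-- `C` is a `κ`-accessible category. -/
def IsCardAccessible (C : Type u) [Category.{v} C] (κ : Cardinal.{v}) : Prop :=
  (∀ (J : Type v) [SmallCategory J], IsCardFiltered J κ → HasColimitsOfShape J C) ∧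
  ∃ G : Set C, Small.{v} G ∧ (∀ A ∈ G, IsCardPresentable κ A) ∧
    ∀ X : C, ∃ (J : Type v) (inst : SmallCategory J) (F : J ⥤ C) (c : Cocone F),
      IsCardFiltered J κ ∧ (∀ j, F.obj j ∈ G) ∧ Nonempty (IsColimit c) ∧ Nonempty (c.pt ≅ X)

/-- `F` preserves colimits of small `κ`-filtered diagrams. -/
def PreservesCardFiltered {C : Type u} [Category.{v} C] {D : Type u₂} [Category.{v} D]
    (F : C ⥤ D) (κ : Cardinal.{v}) : Prop :=
  ∀ (J : Type v) [SmallCategory J], IsCardFiltered J κ →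
    Nonempty (PreservesColimitsOfShape J F)

/-- `F` is a strongly `κ`-accessible functor. -/
def StronglyCardAccessible {C : Type u} [Category.{v} C] {D : Type u₂} [Category.{v} D]
    (F : C ⥤ D) (κ : Cardinal.{v}) : Prop :=
  IsCardAccessible C κ ∧ IsCardAccessible D κ ∧ PreservesCardFiltered F κ ∧
    ∀ X : C, IsCardPresentable κ X → IsCardPresentable κ (F.obj X)

/-- `κ ◁ lam`: `κ` is sharply less than `lam`. -/
def SharplyLess (κ lam : Cardinal.{u}) : Prop :=
  κ < lam ∧ ∀ X : Type u, Cardinal.mk X < lam →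
    ∃ S : Set {s : Set X // Cardinal.mk s < κ},
      Cardinal.mk S < lam ∧ ∀ t : {s : Set X // Cardinal.mk s < κ}, ∃ w ∈ S, t.1 ⊆ w.1


/-! Since `colim φ` is invertible and all vertices are `λ`-presentable, every `i : I` admits a
morphism `u : i ⟶ j` with a "back-and-forth" map `ψ : Y i ⟶ X j`, i.e. `φ_i ≫ ψ = X u` and
`ψ ≫ φ_j = Y u`. Starting at `i₀`, transfinite recursion builds a chain of length `κ` taking such
a `u` at each successor step and a cocone in the `λ`-filtered `I` at each limit step (which has
fewer than `κ ≤ λ` predecessors). Along the chain, the maps `ψ` assemble into a cocone on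
`Y ∘ I'` with vertex `colim (X ∘ I')`, and this is the inverse of the induced map. -/

namespace CategoryTheory

open SmallObject SuccStruct

section Glue

variable {C : Type*} [Category C] {J : Type*} [LinearOrder J]

lemma map_eq_of_restrictionLE_eq {k₂ k₃ : J} {F₂ : Set.Iic k₂ ⥤ C} {F₃ : Set.Iic k₃ ⥤ C}
    {hk : k₂ ≤ k₃} (h : restrictionLE F₃ hk = F₂) {i₁ i₂ : J} (h₁₂ : i₁ ≤ i₂) (h₂ : i₂ ≤ k₂) :
    F₂.map (homOfLE h₁₂ : ⟨i₁, h₁₂.trans h₂⟩ ⟶ ⟨i₂, h₂⟩) =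
      eqToHom (by rw [← h]; rfl) ≫
        F₃.map (homOfLE h₁₂ : ⟨i₁, (h₁₂.trans h₂).trans hk⟩ ⟶ ⟨i₂, h₂.trans hk⟩) ≫
        eqToHom (by rw [← h]; rfl) :=
  Functor.congr_hom h.symm _

variable {S : Set J} {G : ∀ k ∈ S, Set.Iic k ⥤ C}
  (hG : ∀ k₁ k₂ (h₁ : k₁ ∈ S) (h₂ : k₂ ∈ S) (h : k₁ ≤ k₂), restrictionLE (G k₂ h₂) h = G k₁ h₁)

def glueIicMap {k₁ k₂ : J} (h₁ : k₁ ∈ S) (h₂ : k₂ ∈ S) (h : k₁ ≤ k₂) :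
    (G k₁ h₁).obj ⟨k₁, le_rfl⟩ ⟶ (G k₂ h₂).obj ⟨k₂, le_rfl⟩ :=
  eqToHom (by rw [← hG k₁ k₂ h₁ h₂ h]; rfl) ≫
    (G k₂ h₂).map (homOfLE h : (⟨k₁, h⟩ : Set.Iic k₂) ⟶ ⟨k₂, le_rfl⟩)

lemma glueIicMap_refl {k : J} (h : k ∈ S) : glueIicMap hG h h le_rfl = 𝟙 _ := by
  simp [glueIicMap]

lemma glueIicMap_comp {k₁ k₂ k₃ : J} (h₁ : k₁ ∈ S) (h₂ : k₂ ∈ S) (h₃ : k₃ ∈ S) (h₁₂ : k₁ ≤ k₂)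
    (h₂₃ : k₂ ≤ k₃) :
    glueIicMap hG h₁ h₂ h₁₂ ≫ glueIicMap hG h₂ h₃ h₂₃ = glueIicMap hG h₁ h₃ (h₁₂.trans h₂₃) := by
  simp [glueIicMap, map_eq_of_restrictionLE_eq (hG k₂ k₃ h₂ h₃ h₂₃) h₁₂ le_rfl,
    ← Functor.map_comp]

def glueIic : S ⥤ C where
  obj k := (G k k.2).obj ⟨k, le_rfl⟩
  map {k₁ k₂} f := glueIicMap hG k₁.2 k₂.2 (Subtype.coe_le_coe.2 (leOfHom f))
  map_id k := glueIicMap_refl hG k.2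
  map_comp _ _ := (glueIicMap_comp hG _ _ _ _ _).symm

lemma arrow_mk_glueIic_map {k₁ k₂ : S} (f : k₁ ⟶ k₂) {k : J} (hk : k ∈ S) (h : k₂.1 ≤ k) :
    Arrow.mk ((glueIic hG).map f) =
      arrowMap (G k hk) k₁ k₂ (Subtype.coe_le_coe.2 (leOfHom f)) h := by
  rw [← arrowMap_restrictionLE _ h, hG k₂ k k₂.2 hk h]
  exact Arrow.arrow_mk_eqToHom_comp _ _

end Glue

section Chain

variable {C : Type*} [Category C] {J : Type*} [LinearOrder J] [SuccOrder J]

lemma restrictionLE_extendToSucc {j : J} (hj : ¬IsMax j) (F : Set.Iic j ⥤ C) {Y : C}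
    (f : F.obj ⟨j, le_rfl⟩ ⟶ Y) : restrictionLE (extendToSucc hj F f) (Order.le_succ j) = F :=
  Arrow.functor_ext fun ⟨_, _⟩ ⟨_, h₂⟩ g => arrowMap_extendToSucc hj F f _ _ (leOfHom g) h₂

variable [OrderBot J] (P : Arrow C → Prop) (X₀ : C)

def ChainUpTo (j : J) : Type _ :=
  {F : Set.Iic j ⥤ C // F.obj ⟨⊥, bot_le⟩ = X₀ ∧ ∀ i (hi : i < j), P (arrowSucc F i hi)}

def chainUpToFunctor : Jᵒᵖ ⥤ Type _ where
  obj j := ChainUpTo P X₀ j.unop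
  map f := TypeCat.ofHom fun F => ⟨restrictionLE F.1 (leOfHom f.unop), F.2.1,
    fun i hi => F.2.2 i (hi.trans_le (leOfHom f.unop))⟩

variable {P X₀}

lemma chainUpToFunctor_map_surjective (hP : ∀ X, ∃ (Y : C) (f : X ⟶ Y), P (Arrow.mk f)) (j : J)
    (hj : ¬IsMax j) :
    Function.Surjective ((chainUpToFunctor P X₀).map (homOfLE (Order.le_succ j)).op) := by
  rintro ⟨F, hbot, hsucc⟩
  obtain ⟨Y, f, hf⟩ := hP (F.obj ⟨j, le_rfl⟩)
  refine ⟨⟨extendToSucc hj F f, ?_, fun i hi => ?_⟩,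
    Subtype.ext (restrictionLE_extendToSucc hj F f)⟩
  · rw [extendToSucc_obj_eq hj F f ⊥ bot_le, hbot]
  · obtain hij | rfl := ((Order.lt_succ_iff_of_not_isMax hj).1 hi).lt_or_eq
    · rw [arrowSucc_def, arrowMap_extendToSucc _ _ _ _ _ _ (Order.succ_le_of_lt hij)]
      exact hsucc i hij
    · rwa [arrowSucc_extendToSucc]

lemma chainUpToFunctor_exists_lift
    (hlim : ∀ j : J, Order.IsSuccLimit j → ∀ D : Set.Iio j ⥤ C, Nonempty (Cocone D))
    (j : J) (hj : Order.IsSuccLimit j)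
    (x : ((OrderHom.Subtype.val (· ∈ Set.Iio j)).monotone.functor.op ⋙
      chainUpToFunctor P X₀).sections) :
    ∃ y : ChainUpTo P X₀ j, ∀ i (hi : i < j),
      (chainUpToFunctor P X₀).map (homOfLE hi.le).op y = x.val (op ⟨i, hi⟩) := by
  let G : ∀ k ∈ Set.Iio j, Set.Iic k ⥤ C := fun k hk => (x.val (op ⟨k, hk⟩)).1
  have hG : ∀ k₁ k₂ h₁ h₂ (h : k₁ ≤ k₂), restrictionLE (G k₂ h₂) h = G k₁ h₁ :=
    fun k₁ k₂ h₁ h₂ h => congrArg Subtype.val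
      (x.2 (homOfLE (show (⟨k₁, h₁⟩ : Set.Iio j) ≤ ⟨k₂, h₂⟩ from h)).op)
  obtain ⟨c⟩ := hlim j hj (glueIic hG)
  have hres : ∀ i (hi : i < j), restrictionLE (ofCocone c) hi.le = G i hi :=
    fun i hi => Arrow.functor_ext fun ⟨k₁, _⟩ ⟨k₂, h₂⟩ g =>
      (arrowMap_ofCocone c k₁ k₂ (leOfHom g) (h₂.trans_lt hi)).trans
        (arrow_mk_glueIic_map hG (k₂ := ⟨k₂, h₂.trans_lt hi⟩) _ hi h₂)
  refine ⟨⟨ofCocone c, ?_, fun i hi => ?_⟩, fun i hi => Subtype.ext (hres i hi)⟩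
  · have hbot := hj.bot_lt
    exact (Functor.congr_obj (hres ⊥ hbot) ⟨⊥, le_rfl⟩).trans (x.val (op ⟨⊥, hbot⟩)).2.1
  · have hsucc := hj.succ_lt hi
    have : P (arrowSucc (G _ hsucc) i (Order.lt_succ_of_not_isMax (not_isMax_of_lt hi))) :=
      (x.val (op ⟨_, hsucc⟩)).2.2 _ _
    rwa [← hres _ hsucc] at this

theorem exists_functor_obj_bot_eq_and_succ [WellFoundedLT J] (P : Arrow C → Prop)
    (hP : ∀ X, ∃ (Y : C) (f : X ⟶ Y), P (Arrow.mk f))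
    (hlim : ∀ j : J, Order.IsSuccLimit j → ∀ D : Set.Iio j ⥤ C, Nonempty (Cocone D)) (X₀ : C) :
    ∃ Φ : J ⥤ C, Φ.obj ⊥ = X₀ ∧
      ∀ j, ¬IsMax j → P (Arrow.mk (Φ.map (homOfLE (Order.le_succ j)))) := by
  -- a section of `chainUpToFunctor` is a compatible family of chains on all the `Set.Iic k`
  let d := Functor.WellOrderInductionData.ofExists
    (chainUpToFunctor_map_surjective (X₀ := X₀) hP) (chainUpToFunctor_exists_lift hlim)
  let s := d.sectionsMk ⟨(Functor.const _).obj X₀, rfl, fun _ hi => (not_lt_bot hi).elim⟩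
  let G : ∀ k ∈ (Set.univ : Set J), Set.Iic k ⥤ C := fun k _ => (s.val (op k)).1
  have hG : ∀ k₁ k₂ h₁ h₂ (h : k₁ ≤ k₂), restrictionLE (G k₂ h₂) h = G k₁ h₁ :=
    fun k₁ k₂ _ _ h => congrArg Subtype.val (s.2 (homOfLE h).op)
  let ι : J ⥤ (Set.univ : Set J) := Monotone.functor (f := fun j => ⟨j, trivial⟩) fun _ _ h => h
  refine ⟨ι ⋙ glueIic hG, (s.val (op ⊥)).2.1, fun j hj => ?_⟩
  convert (s.val (op (Order.succ j))).2.2 j (Order.lt_succ_of_not_isMax hj) using 1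
  exact arrow_mk_glueIic_map hG (ι.map (homOfLE (Order.le_succ j))) trivial le_rfl

end Chain

def HasBackAndForth {I E : Type*} [Category I] [Category E] {X Y : I ⥤ E} (φ : X ⟶ Y) {i j : I}
    (f : i ⟶ j) : Prop :=
  ∃ ψ : Y.obj i ⟶ X.obj j, φ.app i ≫ ψ = X.map f ∧ ψ ≫ φ.app j = Y.map f

theorem exists_hasBackAndForth {I E : Type*} [Category I] [Category E] [IsFiltered I]
    {X Y : I ⥤ E} (φ : X ⟶ Y) {cX : Cocone X} (hcX : IsColimit cX) {cY : Cocone Y}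
    (hcY : IsColimit cY) [IsIso (hcX.desc ((Cocone.precompose φ).obj cY))] (i : I)
    [PreservesColimit X (coyoneda.obj (op (X.obj i)))]
    [PreservesColimit X (coyoneda.obj (op (Y.obj i)))]
    [PreservesColimit Y (coyoneda.obj (op (Y.obj i)))] :
    ∃ (j : I) (u : i ⟶ j), HasBackAndForth φ u := by
  set f := hcX.desc ((Cocone.precompose φ).obj cY)
  have hf (k : I) : cX.ι.app k ≫ f = φ.app k ≫ cY.ι.app k := hcX.fac _ k
  obtain ⟨j₁, ψ₁, hψ₁⟩ := exists_hom_of_preservesColimit_coyoneda hcX (cY.ι.app i ≫ inv f)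
  obtain ⟨j₂, u₁, v, hv⟩ := exists_eq_of_preservesColimit_coyoneda hcX (φ.app i ≫ ψ₁) (𝟙 _)
    (by rw [Category.assoc, hψ₁, ← reassoc_of% hf, IsIso.hom_inv_id, Category.comp_id,
      Category.id_comp])
  obtain ⟨j, w, hw⟩ := exists_eq_of_preservesColimit_coyoneda_self hcY
    (ψ₁ ≫ X.map u₁ ≫ φ.app j₂) (Y.map v) (by
      simp only [Category.assoc, Cocone.w, ← hf, Cocone.w_assoc, reassoc_of% hψ₁,
        IsIso.inv_hom_id, Category.comp_id])
  refine ⟨j, v ≫ w, ψ₁ ≫ X.map (u₁ ≫ w), ?_, ?_⟩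
  · simpa using hv =≫ X.map w
  · simpa using hw

section BackAndForthChain

variable {E : Type*} [Category E] {J : Type*} [PartialOrder J] [SuccOrder J] {X Y : J ⥤ E}
  (φ : X ⟶ Y) (ψ : ∀ j, Y.obj j ⟶ X.obj (Order.succ j))
  (hψ₁ : ∀ j, φ.app j ≫ ψ j = X.map (homOfLE (Order.le_succ j)))
  (hψ₂ : ∀ j, ψ j ≫ φ.app (Order.succ j) = Y.map (homOfLE (Order.le_succ j)))

include hψ₁ hψ₂ in
lemma map_comp_backAndForth {a b : J} (f : a ⟶ b) :
    Y.map f ≫ ψ b = ψ a ≫ X.map (homOfLE (Order.succ_le_succ (leOfHom f))) := by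
  obtain rfl | hlt := (leOfHom f).eq_or_lt
  · simp [Subsingleton.elim f (𝟙 a)]
  have h : Order.succ a ≤ b := Order.succ_le_of_lt hlt
  calc Y.map f ≫ ψ b
      = ψ a ≫ φ.app _ ≫ Y.map (homOfLE h) ≫ ψ b := by
        rw [reassoc_of% hψ₂ a, ← Functor.map_comp_assoc, homOfLE_comp]
        rfl
    _ = ψ a ≫ X.map (homOfLE h) ≫ X.map (homOfLE (Order.le_succ b)) := by
        rw [← φ.naturality_assoc, hψ₁]
    _ = ψ a ≫ X.map (homOfLE (Order.succ_le_succ (leOfHom f))) := by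
        rw [← Functor.map_comp, homOfLE_comp]

def coconeOfBackAndForth (cX : Cocone X) : Cocone Y where
  pt := cX.pt
  ι :=
    { app j := ψ j ≫ cX.ι.app (Order.succ j)
      naturality a b f := by
        simp [reassoc_of% map_comp_backAndForth φ ψ hψ₁ hψ₂ f] }

theorem isIso_desc_of_hasBackAndForth {cX : Cocone X} (hcX : IsColimit cX) {cY : Cocone Y}
    (hcY : IsColimit cY) (h : ∀ j, HasBackAndForth φ (homOfLE (Order.le_succ j))) :
    IsIso (hcX.desc ((Cocone.precompose φ).obj cY)) := by
  choose ψ hψ₁ hψ₂ using h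
  refine ⟨hcY.desc (coconeOfBackAndForth φ ψ hψ₁ hψ₂ cX), hcX.hom_ext fun j => ?_,
    hcY.hom_ext fun j => ?_⟩
  · simp [coconeOfBackAndForth, reassoc_of% hψ₁ j]
  · simp [coconeOfBackAndForth, reassoc_of% hψ₂ j]

end BackAndForthChain

end CategoryTheory

lemma cardSmallCat_iff_hasCardinalLT (K : Type v) [SmallCategory K] (κ : Cardinal.{v}) :
    CardSmallCat K κ ↔ HasCardinalLT (Arrow K) κ := by
  let e : Arrow K ≃ Σ p : K × K, p.1 ⟶ p.2 :=
    { toFun f := ⟨(f.left, f.right), f.hom⟩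
      invFun s := Arrow.mk s.2
      left_inv _ := rfl
      right_inv _ := rfl }
  rw [CardSmallCat, hasCardinalLT_iff_cardinal_mk_lt, Cardinal.mk_congr e]

lemma isCardFiltered_iff_isCardinalFiltered (J : Type v) [SmallCategory J] (κ : Cardinal.{v})
    [Fact κ.IsRegular] : IsCardFiltered J κ ↔ IsCardinalFiltered J κ :=
  ⟨fun h => ⟨fun F hA => h _ ((cardSmallCat_iff_hasCardinalLT _ _).2 hA) F⟩,
    fun h K _ hK F => h.nonempty_cocone F ((cardSmallCat_iff_hasCardinalLT K κ).1 hK)⟩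

lemma cardSmallCat_of_mk_lt {K : Type v} [Preorder K] {κ : Cardinal.{v}} (hκ : Cardinal.aleph0 ≤ κ)
    (h : Cardinal.mk K < κ) : CardSmallCat K κ := by
  have hinj : Function.Injective (fun s : (Σ p : K × K, p.1 ⟶ p.2) => s.1) := by
    rintro ⟨p, f⟩ ⟨q, g⟩ (rfl : p = q)
    rw [Subsingleton.elim f g]
  refine (Cardinal.mk_le_of_injective hinj).trans_lt ?_
  rw [Cardinal.mk_prod, Cardinal.lift_id]
  exact Cardinal.mul_lt_of_lt hκ h h

/-- Back-and-forth approximation of isomorphisms along a chain of length `κ`. -/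
theorem stmt11 {E : Type u} [Category.{v} E] (κ lam : Cardinal.{v})
    (hκ : κ.IsRegular) (hlam : lam.IsRegular) (hkl : κ ≤ lam)
    (hcolim : ∀ (J : Type v) [SmallCategory J], IsCardFiltered J κ → HasColimitsOfShape J E)
    {I : Type v} [SmallCategory I] (hI : IsCardFiltered I lam)
    (X Y : I ⥤ E)
    (hX : ∀ i, IsCardPresentable lam (X.obj i)) (hY : ∀ i, IsCardPresentable lam (Y.obj i))
    (φ : X ⟶ Y) (i₀ : I)
    (cX : Cocone X) (hcX : IsColimit cX) (cY : Cocone Y) (hcY : IsColimit cY)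
    (hiso : IsIso (hcX.desc ((Cocone.precompose φ).obj cY))) :
    ∃ (I' : κ.ord.ToType ⥤ I) (z : κ.ord.ToType), (∀ x, z ≤ x) ∧ I'.obj z = i₀ ∧
      ∃ (cX' : Cocone (I' ⋙ X)) (hX' : IsColimit cX') (cY' : Cocone (I' ⋙ Y))
        (hY' : IsColimit cY'),
        IsIso (hX'.desc ((Cocone.precompose (Functor.whiskerLeft I' φ)).obj cY')) := by
  have : Fact κ.IsRegular := ⟨hκ⟩
  have : Fact lam.IsRegular := ⟨hlam⟩
  have : IsCardinalFiltered I lam := (isCardFiltered_iff_isCardinalFiltered I lam).1 hI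
  have : IsFiltered I := isFiltered_of_isCardinalFiltered I lam
  have : Nonempty κ.ord.ToType := by simpa using hκ.ne_zero
  let : OrderBot κ.ord.ToType := WellFoundedLT.toOrderBot _
  let : SuccOrder κ.ord.ToType := SuccOrder.ofLinearWellFoundedLT _
  have : NoMaxOrder κ.ord.ToType := Cardinal.noMaxOrder hκ.aleph0_le
  have : HasColimitsOfShape κ.ord.ToType E :=
    hcolim _ ((isCardFiltered_iff_isCardinalFiltered _ κ).2 inferInstance)
  have hstep (i : I) : ∃ (j : I) (u : i ⟶ j), HasBackAndForth φ u := by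
    have := (hX i I hI).some
    have := (hY i I hI).some
    exact exists_hasBackAndForth φ hcX hcY i
  have hsmall (β : κ.ord.ToType) : CardSmallCat (Set.Iio β) lam := by
    refine cardSmallCat_of_mk_lt hlam.aleph0_le (lt_of_lt_of_le ?_ hkl)
    simpa using Cardinal.mk_Iio_lt β
  obtain ⟨I', hbot, hsucc⟩ := exists_functor_obj_bot_eq_and_succ
    (fun f => HasBackAndForth φ f.hom) hstep (fun β _ D => hI _ (hsmall β) D) i₀
  exact ⟨I', ⊥, fun _ => bot_le, hbot, _, colimit.isColimit _, _, colimit.isColimit _,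
    isIso_desc_of_hasBackAndForth (Functor.whiskerLeft I' φ) (colimit.isColimit _)
      (colimit.isColimit _) fun j => hsucc j (not_isMax j)⟩
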